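/- Let p be a prime number. The number of orbits of the translation action of the group (ℤ/pℤ)³ on the set X(p) of patterns equals ((p!)² + (p−1)³·p²)/p³; equivalently, p³ times the number of orbits equals (p!)² + (p−1)³·p². -/

import Mathlib

/-- A pattern in the discrete torus `(ℤ/nℤ)³` is a set of `n` points any two distinct
members of which differ in all three coordinates. -/
def IsPattern (n : ℕ) (A : Finset (Fin 3 → ZMod n)) : Prop :=
  A.card = n ∧ ∀ x ∈ A, ∀ y ∈ A, x ≠ y → ∀ i, x i ≠ y i

/-- The orbit of a pattern under the translation action of `(ℤ/nℤ)³`. -/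
def orbitOf (n : ℕ) (A : Finset (Fin 3 → ZMod n)) : Set (Finset (Fin 3 → ZMod n)) :=
  { B | ∃ g : Fin 3 → ZMod n, B = A.image (fun x => x + g) }

/-- The set of orbits of the translation action of `(ℤ/nℤ)³` on the set of patterns. -/
def orbitsOfPatterns (n : ℕ) : Set (Set (Finset (Fin 3 → ZMod n))) :=
  { O | ∃ A : Finset (Fin 3 → ZMod n), IsPattern n A ∧ O = orbitOf n A }

/-!
Burnside's lemma reduces the count to the fixed points of each translation `g`. Translation by
`0` fixes all `(p!)²` patterns, which are exactly the graphs `{(x, σ x, τ x)}` of pairs of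
permutations. A nonzero `g` with a vanishing coordinate fixes nothing, since a fixed pattern
would contain two points `a`, `a + g` agreeing in that coordinate. If every coordinate of `g`
is a unit, a fixed pattern contains the whole line `a + ℤ/p · g` through each of its points,
which already has `p` points; so the fixed patterns are these lines, one for each of the `p²`
points with first coordinate `0`. For `p` prime every `g` falls into one of these three cases.
-/

open Finset Function Pointwise

lemma AddAction.sum_natCard_fixedBy {G X : Type*} [AddGroup G] [Fintype G] [AddAction G X]
    [Finite X] :
    ∑ g : G, Nat.card (fixedBy X g) = Nat.card (orbitRel.Quotient G X) * Nat.card G := by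
  classical
  have := Fintype.ofFinite X
  have := Fintype.ofFinite (orbitRel.Quotient G X)
  simpa only [Fintype.card_eq_nat_card] using sum_card_fixedBy_eq_card_orbits_mul_card_addGroup G X

lemma SubAddAction.ncard_setOf_orbit {G M : Type*} [AddGroup G] [AddAction G M]
    (p : SubAddAction G M) :
    {O | ∃ x ∈ p, O = AddAction.orbit G x}.ncard =
      Nat.card (AddAction.orbitRel.Quotient G p) := by
  have hrange : {O | ∃ x ∈ p, O = AddAction.orbit G x} =
      Set.range (Set.image Subtype.val ∘ AddAction.orbitRel.Quotient.orbit (G := G) (α := p)) := by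
    ext O
    constructor
    · rintro ⟨x, hx, rfl⟩
      exact ⟨⟦⟨x, hx⟩⟧, val_image_orbit _⟩
    · rintro ⟨q, rfl⟩
      induction q using Quotient.inductionOn with
      | h x => exact ⟨x, x.2, val_image_orbit x⟩
  rw [hrange, Set.ncard_range_of_injective
    ((Set.image_injective.2 Subtype.val_injective).comp
      AddAction.orbitRel.Quotient.orbit_injective)]

lemma Fintype.card_filter_forall_ne_zero {ι α : Type*} [Fintype ι] [DecidableEq ι] [Fintype α]
    [DecidableEq α] [Zero α] :
    #{g : ι → α | ∀ i, g i ≠ 0} = (Fintype.card α - 1) ^ Fintype.card ι := by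
  have : ({g : ι → α | ∀ i, g i ≠ 0} : Finset _) = Fintype.piFinset fun _ => {0}ᶜ := by
    ext g
    simp [Fintype.mem_piFinset]
  rw [this, Fintype.card_piFinset, prod_const, card_compl, card_singleton, card_univ]

section Patterns

variable {n : ℕ}

lemma IsPattern.vadd {A : Finset (Fin 3 → ZMod n)} (hA : IsPattern n A) (g : Fin 3 → ZMod n) :
    IsPattern n (g +ᵥ A) := by
  refine ⟨by rw [card_vadd_finset, hA.1], ?_⟩
  simp only [mem_vadd_finset, vadd_eq_add]
  rintro _ ⟨x, hx, rfl⟩ _ ⟨y, hy, rfl⟩ hxy i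
  simpa using hA.2 x hx y hy (by rintro rfl; exact hxy rfl) i

variable (n) in
def patterns : SubAddAction (Fin 3 → ZMod n) (Finset (Fin 3 → ZMod n)) where
  carrier := {A | IsPattern n A}
  vadd_mem' g _ hA := hA.vadd g

lemma mem_patterns {A : Finset (Fin 3 → ZMod n)} : A ∈ patterns n ↔ IsPattern n A := Iff.rfl

lemma orbitOf_eq_orbit (A : Finset (Fin 3 → ZMod n)) :
    orbitOf n A = AddAction.orbit (Fin 3 → ZMod n) A := by
  ext B
  simp only [orbitOf, AddAction.mem_orbit_iff, Set.mem_ofPred_eq, vadd_finset_def, vadd_eq_add,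
    add_comm _ (_ : Fin 3 → ZMod n), eq_comm]

lemma ncard_orbitsOfPatterns :
    (orbitsOfPatterns n).ncard =
      Nat.card (AddAction.orbitRel.Quotient (Fin 3 → ZMod n) (patterns n)) := by
  rw [← SubAddAction.ncard_setOf_orbit]
  simp only [orbitsOfPatterns, orbitOf_eq_orbit, mem_patterns]

end Patterns

section Patterns

variable {n : ℕ} [NeZero n]

lemma IsPattern.bijective_eval {A : Finset (Fin 3 → ZMod n)} (hA : IsPattern n A) (i : Fin 3) :
    Bijective fun x : A => (x : Fin 3 → ZMod n) i := by
  refine (Fintype.bijective_iff_injective_and_card _).2 ⟨?_, by simp [hA.1]⟩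
  intro x y hxy
  by_contra hne
  exact hA.2 x x.2 y y.2 (Subtype.coe_ne_coe.2 hne) i hxy

def graphPattern (σ τ : Equiv.Perm (ZMod n)) : Finset (Fin 3 → ZMod n) :=
  univ.image fun x => ![x, σ x, τ x]

lemma isPattern_graphPattern (σ τ : Equiv.Perm (ZMod n)) : IsPattern n (graphPattern σ τ) := by
  have hinj : Injective fun x : ZMod n => (![x, σ x, τ x] : Fin 3 → ZMod n) :=
    fun x y h => by simpa using congrFun h 0
  refine ⟨by rw [graphPattern, card_image_of_injective _ hinj, card_univ, ZMod.card], ?_⟩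
  simp only [graphPattern, mem_image, mem_univ, true_and]
  rintro _ ⟨x, rfl⟩ _ ⟨y, rfl⟩ hxy i
  have hxy : x ≠ y := by rintro rfl; exact hxy rfl
  fin_cases i <;> simp [hxy]

lemma graphPattern_injective : Injective fun στ : Equiv.Perm (ZMod n) × Equiv.Perm (ZMod n) =>
    graphPattern στ.1 στ.2 := by
  rintro ⟨σ, τ⟩ ⟨σ', τ'⟩ h
  have hmem (x : ZMod n) : ∃ y, (![y, σ' y, τ' y] : Fin 3 → ZMod n) = ![x, σ x, τ x] := by
    have : (![x, σ x, τ x] : Fin 3 → ZMod n) ∈ graphPattern σ' τ' := by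
      simp only at h
      rw [← h]
      exact mem_image_of_mem _ (mem_univ x)
    simpa [graphPattern] using this
  have hσ (x) : σ' x = σ x ∧ τ' x = τ x := by
    obtain ⟨y, hy⟩ := hmem x
    obtain rfl : y = x := by simpa using congrFun hy 0
    exact ⟨by simpa using congrFun hy 1, by simpa using congrFun hy 2⟩
  simp only [Prod.mk.injEq]
  exact ⟨Equiv.ext fun x => (hσ x).1.symm, Equiv.ext fun x => (hσ x).2.symm⟩

lemma IsPattern.exists_eq_graphPattern {A : Finset (Fin 3 → ZMod n)} (hA : IsPattern n A) :
    ∃ σ τ : Equiv.Perm (ZMod n), graphPattern σ τ = A := by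
  let e (i : Fin 3) : A ≃ ZMod n := Equiv.ofBijective _ (hA.bijective_eval i)
  refine ⟨(e 0).symm.trans (e 1), (e 0).symm.trans (e 2), ?_⟩
  have hpt (x : ZMod n) : ![x, e 1 ((e 0).symm x), e 2 ((e 0).symm x)] = ((e 0).symm x : _) := by
    ext i
    fin_cases i
    · exact ((e 0).apply_symm_apply x).symm
    · rfl
    · rfl
  ext a
  simp only [graphPattern, mem_image, mem_univ, true_and, Equiv.trans_apply, hpt]
  refine ⟨?_, fun ha => ⟨a 0, ?_⟩⟩
  · rintro ⟨x, rfl⟩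
    exact ((e 0).symm x).2
  · rw [(e 0).symm_apply_eq.2 (show a 0 = e 0 ⟨a, ha⟩ from rfl)]

lemma card_patterns : Nat.card (patterns n) = n.factorial ^ 2 := by
  let f (στ : Equiv.Perm (ZMod n) × Equiv.Perm (ZMod n)) : patterns n :=
    ⟨graphPattern στ.1 στ.2, isPattern_graphPattern στ.1 στ.2⟩
  have hf : Bijective f := by
    refine ⟨fun _ _ h => graphPattern_injective (congrArg Subtype.val h), ?_⟩
    rintro ⟨A, hA⟩
    obtain ⟨σ, τ, rfl⟩ := hA.exists_eq_graphPattern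
    exact ⟨(σ, τ), rfl⟩
  rw [← Nat.card_eq_of_bijective f hf, Nat.card_prod, Nat.card_perm, Nat.card_zmod, sq]

lemma fixedBy_patterns_eq_empty {g : Fin 3 → ZMod n} (hg : g ≠ 0) {i : Fin 3} (hgi : g i = 0) :
    AddAction.fixedBy (patterns n) g = ∅ := by
  refine Set.eq_empty_of_forall_notMem fun ⟨A, hA⟩ hfix => ?_
  have hfix : g +ᵥ A = A := congrArg Subtype.val hfix
  obtain ⟨a, ha⟩ : A.Nonempty := card_pos.1 (by rw [hA.1]; exact NeZero.pos n)
  have hga : g + a ∈ A := hfix ▸ vadd_mem_vadd_finset ha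
  exact hA.2 _ hga a ha (by simpa using hg) i (by simp [hgi])

def line (g a : Fin 3 → ZMod n) : Finset (Fin 3 → ZMod n) :=
  univ.image fun k : ZMod n => a + k • g

lemma mem_line {g a b : Fin 3 → ZMod n} : b ∈ line g a ↔ ∃ k : ZMod n, a + k • g = b := by
  simp [line]

lemma isPattern_line {g : Fin 3 → ZMod n} (hg : ∀ i, IsUnit (g i)) (a : Fin 3 → ZMod n) :
    IsPattern n (line g a) := by
  have hne {k k' : ZMod n} (h : k ≠ k') (i : Fin 3) : (a + k • g) i ≠ (a + k' • g) i := by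
    simpa using mt (hg i).mul_left_inj.1 h
  refine ⟨?_, ?_⟩
  · rw [line, card_image_of_injective, card_univ, ZMod.card]
    intro k k' h
    by_contra hkk
    exact hne hkk 0 (congrFun h 0)
  · simp only [mem_line]
    rintro _ ⟨k, rfl⟩ _ ⟨k', rfl⟩ h
    exact hne (by rintro rfl; exact h rfl)

lemma vadd_line (g a : Fin 3 → ZMod n) : g +ᵥ line g a = line g a := by
  ext b
  simp only [mem_vadd_finset, mem_line, vadd_eq_add]
  constructor
  · rintro ⟨_, ⟨k, rfl⟩, rfl⟩
    exact ⟨k + 1, by rw [add_smul, one_smul]; abel⟩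
  · rintro ⟨k, rfl⟩
    exact ⟨_, ⟨k - 1, rfl⟩, by rw [sub_smul, one_smul]; abel⟩

lemma line_subset {g a : Fin 3 → ZMod n} {A : Finset (Fin 3 → ZMod n)} (hfix : g +ᵥ A = A)
    (ha : a ∈ A) : line g a ⊆ A := by
  have hstep {x} (hx : x ∈ A) : g + x ∈ A := hfix ▸ vadd_mem_vadd_finset hx
  have hnat (m : ℕ) : a + (m : ZMod n) • g ∈ A := by
    induction m with
    | zero => simpa using ha
    | succ m ih => simpa [add_smul, add_comm, add_left_comm] using hstep ih
  intro b hb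
  obtain ⟨k, rfl⟩ := mem_line.1 hb
  obtain ⟨m, rfl⟩ := ZMod.natCast_zmod_surjective k
  exact hnat m

lemma IsPattern.eq_line {g a : Fin 3 → ZMod n} {A : Finset (Fin 3 → ZMod n)} (hA : IsPattern n A)
    (hg : ∀ i, IsUnit (g i)) (hfix : g +ᵥ A = A) (ha : a ∈ A) : A = line g a :=
  (eq_of_subset_of_card_le (line_subset hfix ha) (by rw [hA.1, (isPattern_line hg a).1])).symm

lemma card_fixedBy_patterns_of_isUnit {g : Fin 3 → ZMod n} (hg : ∀ i, IsUnit (g i)) :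
    Nat.card (AddAction.fixedBy (patterns n) g) = n ^ 2 := by
  let f (uv : ZMod n × ZMod n) : AddAction.fixedBy (patterns n) g :=
    ⟨⟨line g ![0, uv.1, uv.2], isPattern_line hg _⟩, Subtype.ext (vadd_line g _)⟩
  have hf : Bijective f := by
    refine ⟨?_, ?_⟩
    · rintro ⟨u, v⟩ ⟨u', v'⟩ h
      have h : line g ![0, u, v] = line g ![0, u', v'] := congrArg (fun A => A.1.1) h
      have hmem : ![0, u', v'] ∈ line g ![0, u, v] := h ▸ mem_line.2 ⟨0, by simp⟩
      obtain ⟨k, hk⟩ := mem_line.1 hmem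
      obtain rfl : k = 0 := by simpa [(hg 0).mul_left_eq_zero] using congrFun hk 0
      simp only [zero_smul, add_zero, Matrix.vecCons_inj, and_true, true_and] at hk
      obtain ⟨rfl, rfl⟩ := hk
      rfl
    · rintro ⟨⟨A, hA⟩, hfix⟩
      obtain ⟨⟨a, haA⟩, ha0⟩ := (hA.bijective_eval 0).surjective 0
      have ha : ![0, a 1, a 2] = a := by
        ext i
        fin_cases i <;> simp [← ha0]
      refine ⟨(a 1, a 2), ?_⟩
      ext1; ext1
      simp only [f, ha]
      exact (hA.eq_line hg (congrArg Subtype.val hfix) haA).symm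
  rw [← Nat.card_eq_of_bijective f hf, Nat.card_prod, Nat.card_zmod, sq]

end Patterns

section Prime

variable {p : ℕ} [Fact p.Prime]

lemma card_fixedBy_patterns (g : Fin 3 → ZMod p) :
    Nat.card (AddAction.fixedBy (patterns p) g) =
      (if g = 0 then p.factorial ^ 2 else 0) + (if ∀ i, g i ≠ 0 then p ^ 2 else 0) := by
  by_cases hg0 : g = 0
  · subst hg0
    simp [card_patterns]
  by_cases hg : ∀ i, g i ≠ 0
  · simp [hg0, hg, card_fixedBy_patterns_of_isUnit fun i => (hg i).isUnit]
  · obtain ⟨i, hi⟩ : ∃ i, g i = 0 := by simpa using hg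
    simp [hg0, hg, fixedBy_patterns_eq_empty hg0 hi]

lemma sum_card_fixedBy_patterns :
    ∑ g : Fin 3 → ZMod p, Nat.card (AddAction.fixedBy (patterns p) g) =
      p.factorial ^ 2 + (p - 1) ^ 3 * p ^ 2 := by
  have hunits : #{g : Fin 3 → ZMod p | ∀ i, g i ≠ 0} = (p - 1) ^ 3 := by
    simpa using Fintype.card_filter_forall_ne_zero (ι := Fin 3) (α := ZMod p)
  simp only [card_fixedBy_patterns, sum_add_distrib, sum_ite_eq', mem_univ, if_true,
    ← sum_filter, sum_const, smul_eq_mul, hunits]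

end Prime

theorem stmt13 (p : ℕ) (hp : p.Prime) :
    p ^ 3 * Set.ncard (orbitsOfPatterns p) = p.factorial ^ 2 + (p - 1) ^ 3 * p ^ 2 := by
  have := Fact.mk hp
  rw [← sum_card_fixedBy_patterns, AddAction.sum_natCard_fixedBy, ncard_orbitsOfPatterns,
    Nat.card_fun, Nat.card_zmod, Nat.card_fin, mul_comm]
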